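/- arXiv:1307.2662 — 5 statements merged into one kernel-verified Lean document; each statement's English description precedes it below -/
import Mathlib

section
/- Let Ω be an n×n real positive semidefinite matrix and let C and D be d×n real matrices satisfying C Ω Dᵀ = D Ω Dᵀ. Then the d×d matrix C Ω Cᵀ − D Ω Dᵀ is positive semidefinite. -/
open Matrix

/-! The hypothesis makes the cross terms of `(C - D) Ω (C - D)ᴴ` equal to `D Ω Dᴴ`, so this
positive semidefinite matrix is exactly `C Ω Cᴴ - D Ω Dᴴ`. -/

namespace Matrix

variable {m n R : Type*} [Fintype n] [Ring R] [StarRing R]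

theorem sub_mul_mul_conjTranspose_sub_of_mul_mul_conjTranspose_eq {Ω : Matrix n n R}
    (hΩ : Ω.IsHermitian) {C D : Matrix m n R} (h : C * Ω * Dᴴ = D * Ω * Dᴴ) :
    (C - D) * Ω * (C - D)ᴴ = C * Ω * Cᴴ - D * Ω * Dᴴ := by
  have h' : D * Ω * Cᴴ = D * Ω * Dᴴ := by
    simpa only [conjTranspose_mul, conjTranspose_conjTranspose, hΩ.eq, Matrix.mul_assoc]
      using congrArg conjTranspose h
  simp only [conjTranspose_sub, Matrix.sub_mul, Matrix.mul_sub, h, h']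
  abel

theorem PosSemidef.mul_mul_conjTranspose_sub_of_mul_mul_conjTranspose_eq [PartialOrder R]
    [Finite m] {Ω : Matrix n n R} (hΩ : Ω.PosSemidef) {C D : Matrix m n R}
    (h : C * Ω * Dᴴ = D * Ω * Dᴴ) : (C * Ω * Cᴴ - D * Ω * Dᴴ).PosSemidef := by
  rw [← sub_mul_mul_conjTranspose_sub_of_mul_mul_conjTranspose_eq hΩ.isHermitian h]
  exact hΩ.mul_mul_conjTranspose_same (C - D)

end Matrix

/-- Generalized Cauchy–Schwarz: if `C Ω Dᵀ = D Ω Dᵀ` with `Ω` positive semidefinite,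
then `C Ω Cᵀ − D Ω Dᵀ` is positive semidefinite. -/
theorem stmt0 (n d : ℕ) (Ω : Matrix (Fin n) (Fin n) ℝ) (hΩ : Ω.PosSemidef)
    (C D : Matrix (Fin d) (Fin n) ℝ) (h : C * Ω * Dᵀ = D * Ω * Dᵀ) :
    (C * Ω * Cᵀ - D * Ω * Dᵀ).PosSemidef := by
  simp only [← conjTranspose_eq_transpose_of_trivial] at h ⊢
  exact hΩ.mul_mul_conjTranspose_sub_of_mul_mul_conjTranspose_eq h
end

section
/- Let Σ be an N×N real positive definite matrix, let Λ be an N×r real matrix of full column rank r, and let W be any N×N real positive definite matrix. Define Ξ_W = (ΛᵀWΛ)⁻¹ ΛᵀWΣWΛ (ΛᵀWΛ)⁻¹ and Ξ_e = (ΛᵀΣ⁻¹Λ)⁻¹. Then Ξ_W − Ξ_e is positive semidefinite; in particular, vᵀΞ_e v ≤ vᵀΞ_W v for every v ∈ ℝʳ. (Consequently the weight W = Σ⁻¹ yields the minimum asymptotic variance of the estimated common component among all weighted principal components estimators.) -/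
/-!
Gauss–Markov argument: with `M = (ΛᵀWΛ)⁻¹`, the matrix `X = WΛM` is a left inverse of `Λ`
(`XᵀΛ = 1`) and `Ξ_W = XᵀΣX`. For any such left inverse, putting `C = (ΛᵀΣ⁻¹Λ)⁻¹` and
`D = X - Σ⁻¹ΛC`, the cross terms collapse to `C` and `XᵀΣX - C = DᵀΣD ⪰ 0`.
-/

open Matrix

theorem Matrix.mulVec_injective_of_rank_eq_card {m n K : Type*} [Fintype n] [Field K]
    {A : Matrix m n K} (hA : A.rank = Fintype.card n) : Function.Injective A.mulVec := by
  have h := LinearMap.finrank_range_add_finrank_ker A.mulVecLin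
  rw [← rank, hA, Module.finrank_fintype_fun_eq_card, add_eq_left,
    Submodule.finrank_eq_zero, LinearMap.ker_eq_bot] at h
  exact h

section GaussMarkov

variable {m n R : Type*} [Fintype m] [Fintype n] [DecidableEq m] [DecidableEq n]
  [CommRing R] [PartialOrder R] [StarRing R]

theorem Matrix.posSemidef_conjTranspose_mul_mul_sub_inv {S : Matrix n n R}
    (hS : S.PosSemidef) (hSu : IsUnit S.det) {L X : Matrix n m R} (hX : Xᴴ * L = 1)
    (hC : IsUnit (Lᴴ * S⁻¹ * L).det) :
    (Xᴴ * S * X - (Lᴴ * S⁻¹ * L)⁻¹).PosSemidef := by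
  set C := (Lᴴ * S⁻¹ * L)⁻¹
  have hCh : Cᴴ = C := (isHermitian_conjTranspose_mul_mul L hS.1.inv).inv.eq
  have hD : (S⁻¹ * L * C)ᴴ = C * (Lᴴ * S⁻¹) := by
    rw [conjTranspose_mul, conjTranspose_mul, hS.1.inv.eq, hCh]
  have hLX : Lᴴ * X = 1 := by simpa using congrArg conjTranspose hX
  have hSS : S * S⁻¹ = 1 := mul_nonsing_inv _ hSu
  have hSS' : S⁻¹ * S = 1 := nonsing_inv_mul _ hSu
  have hCC : C * (Lᴴ * S⁻¹ * L) = 1 := nonsing_inv_mul _ hC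
  have h₁ : Xᴴ * S * (S⁻¹ * L * C) = C :=
    calc Xᴴ * S * (S⁻¹ * L * C) = Xᴴ * (S * S⁻¹) * L * C := by simp only [Matrix.mul_assoc]
      _ = C := by rw [hSS, Matrix.mul_one, hX, Matrix.one_mul]
  have h₂ : C * (Lᴴ * S⁻¹) * S * X = C :=
    calc C * (Lᴴ * S⁻¹) * S * X = C * Lᴴ * (S⁻¹ * S) * X := by simp only [Matrix.mul_assoc]
      _ = C := by rw [hSS', Matrix.mul_one, Matrix.mul_assoc, hLX, Matrix.mul_one]
  have h₃ : C * (Lᴴ * S⁻¹) * S * (S⁻¹ * L * C) = C :=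
    calc C * (Lᴴ * S⁻¹) * S * (S⁻¹ * L * C) = C * Lᴴ * (S⁻¹ * S) * S⁻¹ * L * C := by
          simp only [Matrix.mul_assoc]
      _ = C * (Lᴴ * S⁻¹ * L) * C := by simp only [hSS', Matrix.mul_one, Matrix.mul_assoc]
      _ = C := by rw [hCC, Matrix.one_mul]
  have key : Xᴴ * S * X - C = (X - S⁻¹ * L * C)ᴴ * S * (X - S⁻¹ * L * C) := by
    simp only [conjTranspose_sub, hD, Matrix.sub_mul, Matrix.mul_sub, h₁, h₂, h₃]
    abel
  rw [key]
  exact hS.conjTranspose_mul_mul_same _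

theorem Matrix.posSemidef_weighted_sandwich_sub_inv {S W : Matrix n n R}
    (hS : S.PosSemidef) (hSu : IsUnit S.det) (hW : W.IsHermitian) {L : Matrix n m R}
    (hWL : IsUnit (Lᴴ * W * L).det) (hC : IsUnit (Lᴴ * S⁻¹ * L).det) :
    ((Lᴴ * W * L)⁻¹ * (Lᴴ * W * S * W * L) * (Lᴴ * W * L)⁻¹
      - (Lᴴ * S⁻¹ * L)⁻¹).PosSemidef := by
  set M := (Lᴴ * W * L)⁻¹
  have hMh : Mᴴ = M := (isHermitian_conjTranspose_mul_mul L hW).inv.eq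
  have hXh : (W * L * M)ᴴ = M * (Lᴴ * W) := by
    rw [conjTranspose_mul, conjTranspose_mul, hW.eq, hMh]
  have hXL : (W * L * M)ᴴ * L = 1 := by
    rw [hXh, Matrix.mul_assoc]
    exact nonsing_inv_mul _ hWL
  have hXSX : (W * L * M)ᴴ * S * (W * L * M) = M * (Lᴴ * W * S * W * L) * M := by
    rw [hXh]
    simp only [Matrix.mul_assoc]
  simpa only [hXSX] using posSemidef_conjTranspose_mul_mul_sub_inv hS hSu hXL hC

end GaussMarkov

/-- Optimality of the weight `W = Σ⁻¹`: `Ξ_W − Ξ_e` is positive semidefinite for every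
positive definite weight matrix `W`, and consequently `vᵀ Ξ_e v ≤ vᵀ Ξ_W v` for all `v`. -/
theorem stmt1 (N r : ℕ) (Sig : Matrix (Fin N) (Fin N) ℝ) (hSig : Sig.PosDef)
    (Λ : Matrix (Fin N) (Fin r) ℝ) (hΛ : Λ.rank = r)
    (W : Matrix (Fin N) (Fin N) ℝ) (hW : W.PosDef) :
    ((Λᵀ * W * Λ)⁻¹ * (Λᵀ * W * Sig * W * Λ) * (Λᵀ * W * Λ)⁻¹
      - (Λᵀ * Sig⁻¹ * Λ)⁻¹).PosSemidef
    ∧ ∀ v : Fin r → ℝ,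
        v ⬝ᵥ ((Λᵀ * Sig⁻¹ * Λ)⁻¹ *ᵥ v)
          ≤ v ⬝ᵥ (((Λᵀ * W * Λ)⁻¹ * (Λᵀ * W * Sig * W * Λ) * (Λᵀ * W * Λ)⁻¹) *ᵥ v) := by
  have hinj : Function.Injective Λ.mulVec := mulVec_injective_of_rank_eq_card (by simpa using hΛ)
  have hWΛ : (Λᴴ * W * Λ).PosDef := hW.conjTranspose_mul_mul_same hinj
  have hSigΛ : (Λᴴ * Sig⁻¹ * Λ).PosDef := hSig.inv.conjTranspose_mul_mul_same hinj
  have hpsd := posSemidef_weighted_sandwich_sub_inv hSig.posSemidef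
    ((isUnit_iff_isUnit_det _).mp hSig.isUnit) hW.isHermitian
    ((isUnit_iff_isUnit_det _).mp hWΛ.isUnit) ((isUnit_iff_isUnit_det _).mp hSigΛ.isUnit)
  rw [conjTranspose_eq_transpose_of_trivial] at hpsd
  refine ⟨hpsd, fun v => ?_⟩
  have hv := hpsd.dotProduct_mulVec_nonneg v
  rwa [sub_mulVec, dotProduct_sub, star_trivial, sub_nonneg] at hv
end

section
/- Let Σ be an N×N real positive definite matrix, Λ an N×r real matrix of full column rank, and F a T×r real matrix with FᵀF invertible; set M_F = I_T − F(FᵀF)⁻¹Fᵀ, A_F = [Σ⁻¹ − Σ⁻¹Λ(ΛᵀΣ⁻¹Λ)⁻¹ΛᵀΣ⁻¹] ⊗ M_F, and G = [I_N − Λ(ΛᵀΛ)⁻¹Λᵀ] ⊗ M_F, where ⊗ denotes the Kronecker product. Then G (Σ ⊗ I_T) A_F = G. -/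
/-! By the mixed-product rule the left side is `(P Σ Q) ⊗ (M_F M_F)` with `P = I − Λ(ΛᵀΛ)⁻¹Λᵀ`.
`M_F` is idempotent, and `ΣQ = I − Λ(ΛᵀΣ⁻¹Λ)⁻¹ΛᵀΣ⁻¹` differs from the identity by a term
starting with `Λ`, which `P` annihilates; hence `P Σ Q = P`. -/

open Matrix
open scoped Kronecker

namespace Matrix

variable {m n R : Type*} [Fintype m] [Fintype n] [CommRing R]

theorem mul_mul_inv_sub_eq_of_mul_eq_zero [DecidableEq m] {P S : Matrix m m R}
    {Λ : Matrix m n R} (X : Matrix n n R) (hPΛ : P * Λ = 0) (hS : IsUnit S.det) :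
    P * S * (S⁻¹ - S⁻¹ * Λ * X * Λᵀ * S⁻¹) = P := by
  have hkill : P * S * (S⁻¹ * Λ * X * Λᵀ * S⁻¹) = 0 := by
    simp only [Matrix.mul_assoc, mul_nonsing_inv_cancel_left _ _ hS]
    rw [← Matrix.mul_assoc, hPΛ, Matrix.zero_mul]
  rw [mul_sub, hkill, sub_zero, Matrix.mul_assoc, mul_nonsing_inv _ hS, Matrix.mul_one]

variable [DecidableEq n]

theorem isUnit_det_of_rank_eq_card {K : Type*} [Field K] {A : Matrix n n K}
    (h : A.rank = Fintype.card n) : IsUnit A.det := by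
  rw [← isUnit_iff_isUnit_det, ← mulVec_surjective_iff_isUnit]
  have hrange : LinearMap.range A.mulVecLin = ⊤ :=
    Submodule.eq_top_of_finrank_eq (by rwa [Module.finrank_fintype_fun_eq_card])
  exact LinearMap.range_eq_top.mp hrange

theorem isUnit_det_transpose_mul_self_of_rank_eq_card {A : Matrix m n ℝ}
    (h : A.rank = Fintype.card n) : IsUnit (Aᵀ * A).det :=
  isUnit_det_of_rank_eq_card (by rw [rank_transpose_mul_self, h])

variable [DecidableEq m]

noncomputable def residualMaker (F : Matrix m n R) : Matrix m m R :=
  1 - F * (Fᵀ * F)⁻¹ * Fᵀ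

theorem residualMaker_mul_self {F : Matrix m n R} (h : IsUnit (Fᵀ * F).det) :
    residualMaker F * F = 0 := by
  rw [residualMaker, Matrix.sub_mul, Matrix.one_mul, Matrix.mul_assoc, Matrix.mul_assoc,
    nonsing_inv_mul _ h, Matrix.mul_one, sub_self]

/-- When `FᵀF` is singular, `(FᵀF)⁻¹ = 0` and `residualMaker F = 1`, which is idempotent too. -/
theorem isIdempotentElem_residualMaker (F : Matrix m n R) :
    IsIdempotentElem (residualMaker F) := by
  by_cases h : IsUnit (Fᵀ * F).det
  · have hproj : F * (Fᵀ * F)⁻¹ * Fᵀ * (F * (Fᵀ * F)⁻¹ * Fᵀ) = F * (Fᵀ * F)⁻¹ * Fᵀ := by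
      simp only [Matrix.mul_assoc]
      rw [← Matrix.mul_assoc Fᵀ F, nonsing_inv_mul_cancel_left _ _ h]
    simp only [IsIdempotentElem, residualMaker, sub_mul, mul_sub, one_mul, Matrix.mul_one, hproj]
    abel
  · simp [IsIdempotentElem, residualMaker, nonsing_inv_apply_not_isUnit _ h]

end Matrix

theorem stmt5_general (N r T : ℕ) (Sig : Matrix (Fin N) (Fin N) ℝ) (hSig : Sig.PosDef)
    (Λ : Matrix (Fin N) (Fin r) ℝ) (hΛ : Λ.rank = r)
    (F : Matrix (Fin T) (Fin r) ℝ) :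
    (((1 : Matrix (Fin N) (Fin N) ℝ) - Λ * (Λᵀ * Λ)⁻¹ * Λᵀ) ⊗ₖ
        ((1 : Matrix (Fin T) (Fin T) ℝ) - F * (Fᵀ * F)⁻¹ * Fᵀ))
      * (Sig ⊗ₖ (1 : Matrix (Fin T) (Fin T) ℝ))
      * ((Sig⁻¹ - Sig⁻¹ * Λ * (Λᵀ * Sig⁻¹ * Λ)⁻¹ * Λᵀ * Sig⁻¹) ⊗ₖ
        ((1 : Matrix (Fin T) (Fin T) ℝ) - F * (Fᵀ * F)⁻¹ * Fᵀ))
    = ((1 : Matrix (Fin N) (Fin N) ℝ) - Λ * (Λᵀ * Λ)⁻¹ * Λᵀ) ⊗ₖ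
        ((1 : Matrix (Fin T) (Fin T) ℝ) - F * (Fᵀ * F)⁻¹ * Fᵀ) := by
  have hΛΛ : IsUnit (Λᵀ * Λ).det :=
    isUnit_det_transpose_mul_self_of_rank_eq_card (by rw [hΛ, Fintype.card_fin])
  have hPSQ : residualMaker Λ * Sig * (Sig⁻¹ - Sig⁻¹ * Λ * (Λᵀ * Sig⁻¹ * Λ)⁻¹ * Λᵀ * Sig⁻¹) =
      residualMaker Λ :=
    mul_mul_inv_sub_eq_of_mul_eq_zero _ (residualMaker_mul_self hΛΛ)
      ((isUnit_iff_isUnit_det _).mp hSig.isUnit)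
  rw [← mul_kronecker_mul, ← mul_kronecker_mul, Matrix.mul_one]
  exact congrArg₂ (· ⊗ₖ ·) hPSQ (isIdempotentElem_residualMaker F)

/-- The identity `G (Σ ⊗ I_T) A_F = G`, where `G` is the regular-PC analogue of `A_F`. -/
theorem stmt5 (N r T : ℕ) (Sig : Matrix (Fin N) (Fin N) ℝ) (hSig : Sig.PosDef)
    (Λ : Matrix (Fin N) (Fin r) ℝ) (hΛ : Λ.rank = r)
    (F : Matrix (Fin T) (Fin r) ℝ) (hF : IsUnit (Fᵀ * F).det) :
    (((1 : Matrix (Fin N) (Fin N) ℝ) - Λ * (Λᵀ * Λ)⁻¹ * Λᵀ) ⊗ₖ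
        ((1 : Matrix (Fin T) (Fin T) ℝ) - F * (Fᵀ * F)⁻¹ * Fᵀ))
      * (Sig ⊗ₖ (1 : Matrix (Fin T) (Fin T) ℝ))
      * ((Sig⁻¹ - Sig⁻¹ * Λ * (Λᵀ * Sig⁻¹ * Λ)⁻¹ * Λᵀ * Sig⁻¹) ⊗ₖ
        ((1 : Matrix (Fin T) (Fin T) ℝ) - F * (Fᵀ * F)⁻¹ * Fᵀ))
    = ((1 : Matrix (Fin N) (Fin N) ℝ) - Λ * (Λᵀ * Λ)⁻¹ * Λᵀ) ⊗ₖ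
        ((1 : Matrix (Fin T) (Fin T) ℝ) - F * (Fᵀ * F)⁻¹ * Fᵀ) :=
  stmt5_general N r T Sig hSig Λ hΛ F
end

section
/- Let Σ be an N×N real positive definite matrix, Λ an N×r real matrix of full column rank, and F a T×r real matrix with FᵀF invertible; set M_F = I_T − F(FᵀF)⁻¹Fᵀ and A_F = [Σ⁻¹ − Σ⁻¹Λ(ΛᵀΣ⁻¹Λ)⁻¹ΛᵀΣ⁻¹] ⊗ M_F, where ⊗ denotes the Kronecker product. Let (Ω, 𝔉, P) be a probability space and U : Ω → ℝ^{N·T} a random vector whose coordinates are square-integrable with E[U_a] = 0 for all a and Cov(U_a, U_b) = (Σ ⊗ I_T)_{ab} for all coordinates a, b. Then for any fixed (N·T)×d real matrix Z and all i, j ≤ d, Cov((Zᵀ A_F U)_i, (Zᵀ A_F U)_j) = (Zᵀ A_F Z)_{ij}. -/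
open Matrix MeasureTheory
open scoped Kronecker

/-- Covariance of two real random variables. -/
noncomputable def cov {Ω : Type*} [MeasurableSpace Ω] (P : MeasureTheory.Measure Ω)
    (X Y : Ω → ℝ) : ℝ :=
  ∫ ω, (X ω - ∫ x, X x ∂P) * (Y ω - ∫ x, Y x ∂P) ∂P

/-!
Covariance is bilinear, so the covariance matrix of `B U` is `B (Σ ⊗ I) Bᵀ`; for `B = Zᵀ A_F`
this is `Zᵀ A_F (Σ ⊗ I) A_F Z`. Both Kronecker factors of `A_F` are symmetric and the first is
a generalized inverse of `Σ` while `M_F` is idempotent, so `A_F (Σ ⊗ I) A_F = A_F`.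
-/

open ProbabilityTheory

namespace Matrix

lemma mulVec_injective_of_rank_eq_card_s7 {m n K : Type*} [Fintype m] [Fintype n] [Field K]
    {A : Matrix m n K} (h : A.rank = Fintype.card n) : Function.Injective A.mulVec :=
  mulVec_injective_iff.mpr <| linearIndependent_iff_card_eq_finrank_span.mpr <| by
    rw [Set.finrank, ← rank_eq_finrank_span_cols, h]

section GlsResidual

variable {m n R : Type*} [Fintype m] [Fintype n] [DecidableEq m] [DecidableEq n] [CommRing R]

/-- The first Kronecker factor of `A_F`; for `S = 1` it is the residual projection `M_L`. -/
noncomputable def glsResidual (S : Matrix m m R) (L : Matrix m n R) : Matrix m m R :=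
  S⁻¹ - S⁻¹ * L * (Lᵀ * S⁻¹ * L)⁻¹ * Lᵀ * S⁻¹

lemma glsResidual_one (L : Matrix m n R) : glsResidual 1 L = 1 - L * (Lᵀ * L)⁻¹ * Lᵀ := by
  simp [glsResidual]

lemma transpose_glsResidual {S : Matrix m m R} (hS : Sᵀ = S) (L : Matrix m n R) :
    (glsResidual S L)ᵀ = glsResidual S L := by
  simp only [glsResidual, transpose_sub, transpose_mul, transpose_transpose,
    transpose_nonsing_inv, hS, Matrix.mul_assoc]

lemma glsResidual_mul_mul_self {S : Matrix m m R} {L : Matrix m n R} (hS : IsUnit S.det)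
    (hL : IsUnit (Lᵀ * S⁻¹ * L).det) :
    glsResidual S L * S * glsResidual S L = glsResidual S L := by
  have hinv_mul (X : Matrix m m R) : S⁻¹ * (S * X) = X := nonsing_inv_mul_cancel_left _ _ hS
  have hmul_inv (X : Matrix n m R) : Lᵀ * (S⁻¹ * (L * ((Lᵀ * (S⁻¹ * L))⁻¹ * X))) = X := by
    rw [← Matrix.mul_assoc S⁻¹, ← Matrix.mul_assoc Lᵀ]
    exact mul_nonsing_inv_cancel_left _ _ (by rwa [← Matrix.mul_assoc])
  simp only [glsResidual, Matrix.sub_mul, Matrix.mul_sub, Matrix.mul_assoc, hinv_mul, hmul_inv,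
    mul_nonsing_inv _ hS, Matrix.mul_one]
  abel

end GlsResidual

lemma mul_mul_transpose_of_mul_mul_self {m n R : Type*} [Fintype m] [CommSemiring R]
    {A S : Matrix m m R} (hA : Aᵀ = A) (hASA : A * S * A = A) (Z : Matrix m n R) :
    Zᵀ * A * S * (Zᵀ * A)ᵀ = Zᵀ * A * Z := by
  rw [transpose_mul, transpose_transpose, hA]
  calc Zᵀ * A * S * (A * Z) = Zᵀ * (A * S * A) * Z := by simp only [Matrix.mul_assoc]
    _ = Zᵀ * A * Z := by rw [hASA, Matrix.mul_assoc]

end Matrix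

lemma ProbabilityTheory.covariance_mulVec_mulVec {Ω ι κ : Type*} [MeasurableSpace Ω]
    [Fintype ι] {P : Measure Ω} [IsFiniteMeasure P] {U : Ω → ι → ℝ}
    (hU : ∀ a, MemLp (fun ω => U ω a) 2 P) {K : Matrix ι ι ℝ}
    (hK : ∀ a b, cov[fun ω => U ω a, fun ω => U ω b; P] = K a b) (B : Matrix κ ι ℝ) (i j : κ) :
    cov[fun ω => (B *ᵥ U ω) i, fun ω => (B *ᵥ U ω) j; P] = (B * K * Bᵀ) i j := by
  simp only [mulVec, dotProduct]
  rw [covariance_fun_sum_fun_sum (fun a => (hU a).const_mul _) (fun b => (hU b).const_mul _)]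
  simp only [covariance_const_mul_left, covariance_const_mul_right, hK, mul_apply,
    transpose_apply, Finset.sum_mul]
  rw [Finset.sum_comm]
  exact Finset.sum_congr rfl fun b _ => Finset.sum_congr rfl fun a _ => by ring

theorem stmt7_general (N r T d : ℕ) (Sig : Matrix (Fin N) (Fin N) ℝ) (hSig : Sig.PosDef)
    (Λ : Matrix (Fin N) (Fin r) ℝ) (hΛ : Λ.rank = r)
    (F : Matrix (Fin T) (Fin r) ℝ) (hF : IsUnit (Fᵀ * F).det)
    {Ω : Type*} [MeasurableSpace Ω] (P : MeasureTheory.Measure Ω) [IsProbabilityMeasure P]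
    (U : Ω → Fin N × Fin T → ℝ)
    (hUint : ∀ a, MemLp (fun ω => U ω a) 2 P)
    (hUcov : ∀ a b, cov P (fun ω => U ω a) (fun ω => U ω b)
        = (Sig ⊗ₖ (1 : Matrix (Fin T) (Fin T) ℝ)) a b)
    (Z : Matrix (Fin N × Fin T) (Fin d) ℝ) :
    ∀ i j : Fin d,
      cov P
        (fun ω => ((Zᵀ * ((Sig⁻¹ - Sig⁻¹ * Λ * (Λᵀ * Sig⁻¹ * Λ)⁻¹ * Λᵀ * Sig⁻¹) ⊗ₖ
            ((1 : Matrix (Fin T) (Fin T) ℝ) - F * (Fᵀ * F)⁻¹ * Fᵀ))) *ᵥ U ω) i)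
        (fun ω => ((Zᵀ * ((Sig⁻¹ - Sig⁻¹ * Λ * (Λᵀ * Sig⁻¹ * Λ)⁻¹ * Λᵀ * Sig⁻¹) ⊗ₖ
            ((1 : Matrix (Fin T) (Fin T) ℝ) - F * (Fᵀ * F)⁻¹ * Fᵀ))) *ᵥ U ω) j)
      = (Zᵀ * ((Sig⁻¹ - Sig⁻¹ * Λ * (Λᵀ * Sig⁻¹ * Λ)⁻¹ * Λᵀ * Sig⁻¹) ⊗ₖ
            ((1 : Matrix (Fin T) (Fin T) ℝ) - F * (Fᵀ * F)⁻¹ * Fᵀ)) * Z) i j := by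
  intro i j
  rw [← glsResidual_one, ← glsResidual.eq_1]
  have hSigT : Sigᵀ = Sig := by simpa using hSig.isHermitian.eq
  have hSigDet : IsUnit Sig.det := isUnit_iff_ne_zero.mpr hSig.det_pos.ne'
  have hGram : (Λᵀ * Sig⁻¹ * Λ).PosDef := by
    simpa using hSig.inv.conjTranspose_mul_mul_same
      (mulVec_injective_of_rank_eq_card_s7 (by rw [hΛ, Fintype.card_fin]))
  have hA : (glsResidual Sig Λ ⊗ₖ glsResidual 1 F)ᵀ = glsResidual Sig Λ ⊗ₖ glsResidual 1 F := by
    rw [← kroneckerMap_transpose, transpose_glsResidual hSigT, transpose_glsResidual transpose_one]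
  have hASA : (glsResidual Sig Λ ⊗ₖ glsResidual 1 F) * (Sig ⊗ₖ 1) *
      (glsResidual Sig Λ ⊗ₖ glsResidual 1 F) = glsResidual Sig Λ ⊗ₖ glsResidual 1 F := by
    rw [← mul_kronecker_mul, ← mul_kronecker_mul,
      glsResidual_mul_mul_self hSigDet (isUnit_iff_ne_zero.mpr hGram.det_pos.ne'),
      glsResidual_mul_mul_self (by simp) (by simpa using hF)]
  rw [← mul_mul_transpose_of_mul_mul_self hA hASA]
  exact covariance_mulVec_mulVec hUint hUcov _ i j

/-- If `U` has mean zero and covariance matrix `Σ ⊗ I_T`, then the covariance matrix of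
`Zᵀ A_F U` is `Zᵀ A_F Z`. -/
theorem stmt7 (N r T d : ℕ) (Sig : Matrix (Fin N) (Fin N) ℝ) (hSig : Sig.PosDef)
    (Λ : Matrix (Fin N) (Fin r) ℝ) (hΛ : Λ.rank = r)
    (F : Matrix (Fin T) (Fin r) ℝ) (hF : IsUnit (Fᵀ * F).det)
    {Ω : Type*} [MeasurableSpace Ω] (P : MeasureTheory.Measure Ω) [IsProbabilityMeasure P]
    (U : Ω → Fin N × Fin T → ℝ)
    (hUint : ∀ a, MemLp (fun ω => U ω a) 2 P)
    (hUmean : ∀ a, ∫ ω, U ω a ∂P = 0)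
    (hUcov : ∀ a b, cov P (fun ω => U ω a) (fun ω => U ω b)
        = (Sig ⊗ₖ (1 : Matrix (Fin T) (Fin T) ℝ)) a b)
    (Z : Matrix (Fin N × Fin T) (Fin d) ℝ) :
    ∀ i j : Fin d,
      cov P
        (fun ω => ((Zᵀ * ((Sig⁻¹ - Sig⁻¹ * Λ * (Λᵀ * Sig⁻¹ * Λ)⁻¹ * Λᵀ * Sig⁻¹) ⊗ₖ
            ((1 : Matrix (Fin T) (Fin T) ℝ) - F * (Fᵀ * F)⁻¹ * Fᵀ))) *ᵥ U ω) i)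
        (fun ω => ((Zᵀ * ((Sig⁻¹ - Sig⁻¹ * Λ * (Λᵀ * Sig⁻¹ * Λ)⁻¹ * Λᵀ * Sig⁻¹) ⊗ₖ
            ((1 : Matrix (Fin T) (Fin T) ℝ) - F * (Fᵀ * F)⁻¹ * Fᵀ))) *ᵥ U ω) j)
      = (Zᵀ * ((Sig⁻¹ - Sig⁻¹ * Λ * (Λᵀ * Sig⁻¹ * Λ)⁻¹ * Λᵀ * Sig⁻¹) ⊗ₖ
            ((1 : Matrix (Fin T) (Fin T) ℝ) - F * (Fᵀ * F)⁻¹ * Fᵀ)) * Z) i j :=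
  stmt7_general N r T d Sig hSig Λ hΛ F hF P U hUint hUcov Z
end

section
/- Let W be an N×N real symmetric positive semidefinite matrix and Y an N×T real matrix. Let F̂ be a T×r matrix whose columns are √T times orthonormal eigenvectors of Yᵀ W Y corresponding to its r largest eigenvalues, and let Λ̂ = T⁻¹ Y F̂. Then (1/T) F̂ᵀ F̂ = I_r, the r×r matrix Λ̂ᵀ W Λ̂ is diagonal, and for every N×r real matrix Λ and every T×r real matrix F with (1/T) FᵀF = I_r, trace[(Y − Λ̂F̂ᵀ)ᵀ W (Y − Λ̂F̂ᵀ)] ≤ trace[(Y − ΛFᵀ)ᵀ W (Y − ΛFᵀ)]. -/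
open Matrix

/-!
Completing the square in `Λ` (using `FᵀF = T • 1` and the symmetry of `W`) writes the
objective as `tr (YᵀWY) - T⁻¹ tr (FᵀAF) + T tr (DᵀWD)` with `A = YᵀWY` and `D = Λ - T⁻¹ Y F`;
the last term is nonnegative and vanishes at `Λ = T⁻¹ Y F`. Minimizing therefore amounts to
maximizing `tr (FᵀAF)`, which by Ky Fan's inequality is at most `T` times the sum of the `r`
largest eigenvalues of `A`, and `F̂` attains this bound. After diagonalizing `A = Q diag ν Qᵀ`,
Ky Fan's inequality is the bathtub principle: the diagonal entries of `G Gᵀ`, `G = Qᵀ F`, lie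
in `[0, T]` and sum to `r T`.
-/

open Finset in
theorem bathtub_sum_mul_le {ι : Type*} [Fintype ι] [DecidableEq ι] (S : Finset ι)
    {ν s : ι → ℝ} {c : ℝ}
    (hν : ∀ t ∈ S, ∀ u ∉ S, ν u ≤ ν t) (hs0 : ∀ t, 0 ≤ s t) (hsc : ∀ t ∈ S, s t ≤ c)
    (hsum : ∑ t, s t = #S * c) :
    ∑ t, ν t * s t ≤ c * ∑ t ∈ S, ν t := by
  obtain ⟨p, hpS, hpSc⟩ : ∃ p, (∀ t ∈ S, p ≤ ν t) ∧ ∀ u ∉ S, ν u ≤ p := by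
    rcases S.eq_empty_or_nonempty with rfl | hS
    · obtain ⟨p, hp⟩ := (Set.finite_range ν).bddAbove
      exact ⟨p, by simp, fun u _ => hp ⟨u, rfl⟩⟩
    · obtain ⟨t₀, ht₀, hmin⟩ := S.exists_min_image ν hS
      exact ⟨ν t₀, hmin, fun u hu => hν t₀ ht₀ u hu⟩
  -- `w = c • 𝟙_S` and `s` have the same total mass, so shifting `ν` by the pivot `p` is free,
  -- and after the shift every term of `∑ (ν t - p) * (w t - s t)` is nonnegative
  have hterm : ∀ t, 0 ≤ (ν t - p) * ((if t ∈ S then c else 0) - s t) := by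
    intro t
    by_cases ht : t ∈ S
    · simp only [ht, if_true]
      exact mul_nonneg (sub_nonneg.2 (hpS t ht)) (sub_nonneg.2 (hsc t ht))
    · simp only [ht, if_false, zero_sub]
      exact mul_nonneg_of_nonpos_of_nonpos (sub_nonpos.2 (hpSc t ht)) (neg_nonpos.2 (hs0 t))
  have hexpand : ∑ t, (ν t - p) * ((if t ∈ S then c else 0) - s t)
      = c * ∑ t ∈ S, ν t - ∑ t, ν t * s t - p * (#S * c - ∑ t, s t) := by
    simp only [mul_sub, sub_mul, mul_ite, mul_zero, sum_sub_distrib, sum_ite_mem, univ_inter,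
      ← sum_mul, ← mul_sum, sum_const, nsmul_eq_mul]
    ring
  have hnonneg := sum_nonneg fun t (_ : t ∈ univ) => hterm t
  rw [hexpand, hsum, sub_self, mul_zero, sub_zero] at hnonneg
  exact sub_nonneg.mp hnonneg

theorem diag_mul_transpose_le {m n : Type*} [Fintype m] [Fintype n] [DecidableEq n]
    {G : Matrix m n ℝ} {c : ℝ} (hc : 0 ≤ c) (hG : Gᵀ * G = c • 1) (t : m) :
    (G * Gᵀ) t t ≤ c := by
  set P := G * Gᵀ
  have hPsymm : Pᵀ = P := by simp [P, transpose_mul]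
  have hPP : P * P = c • P := by
    rw [show P * P = G * (Gᵀ * G) * Gᵀ by simp [P, Matrix.mul_assoc], hG,
      Matrix.mul_smul, Matrix.mul_one, Matrix.smul_mul]
  have hP0 : 0 ≤ P t t := by
    simpa [P, mul_apply] using
      Finset.sum_nonneg fun k (_ : k ∈ Finset.univ) => mul_self_nonneg (G t k)
  -- `P` is `c` times an orthogonal projection, so `P t t ^ 2 ≤ ∑ u, P t u ^ 2 = c * P t t`
  have hsq : P t t ^ 2 ≤ c * P t t := by
    have hdiag : (P * P) t t = ∑ u, P t u ^ 2 := by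
      simp only [mul_apply, sq]
      refine Finset.sum_congr rfl fun u _ => ?_
      rw [← transpose_apply P u t, hPsymm]
    calc P t t ^ 2 ≤ ∑ u, P t u ^ 2 :=
          Finset.single_le_sum (f := fun u => P t u ^ 2) (fun u _ => sq_nonneg _)
            (Finset.mem_univ t)
      _ = c * P t t := by rw [← hdiag, hPP, Matrix.smul_apply, smul_eq_mul]
  nlinarith

theorem trace_transpose_mul_diagonal_mul {m n : Type*} [Fintype m] [Fintype n] [DecidableEq m]
    (G : Matrix m n ℝ) (ν : m → ℝ) :
    trace (Gᵀ * diagonal ν * G) = ∑ t, ν t * (G * Gᵀ) t t := by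
  rw [Matrix.mul_assoc, trace_mul_comm, Matrix.mul_assoc, trace]
  simp [diagonal_mul]

theorem ky_fan_trace_le {T r : ℕ} (hrT : r ≤ T) {ν : Fin T → ℝ} (hν : Antitone ν)
    {Q : Matrix (Fin T) (Fin T) ℝ} (hQ : Qᵀ * Q = 1)
    {F : Matrix (Fin T) (Fin r) ℝ} {c : ℝ} (hc : 0 ≤ c) (hF : Fᵀ * F = c • 1) :
    trace (Fᵀ * (Q * diagonal ν * Qᵀ) * F) ≤ c * ∑ k, ν (Fin.castLE hrT k) := by
  set G := Qᵀ * F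
  have hG : Gᵀ * G = c • 1 := by
    rw [transpose_mul, transpose_transpose, Matrix.mul_assoc, ← Matrix.mul_assoc Q,
      mul_eq_one_comm.mp hQ, Matrix.one_mul, hF]
  have htrace : trace (Fᵀ * (Q * diagonal ν * Qᵀ) * F) = trace (Gᵀ * diagonal ν * G) := by
    simp only [G, transpose_mul, transpose_transpose, Matrix.mul_assoc]
  set S := Finset.univ.map (Fin.castLEEmb hrT)
  have hmemS : ∀ t, t ∈ S ↔ (t : ℕ) < r := fun t => by
    simp only [S, Finset.mem_map, Finset.mem_univ, true_and]
    exact ⟨by rintro ⟨k, rfl⟩; exact k.isLt, fun h => ⟨⟨t, h⟩, rfl⟩⟩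
  have hdiag_sum : ∑ t, (G * Gᵀ) t t = S.card * c := by
    change trace (G * Gᵀ) = _
    rw [trace_mul_comm, hG, trace_smul, trace_one, Finset.card_map, Finset.card_univ,
      Fintype.card_fin, smul_eq_mul, mul_comm]
  rw [htrace, trace_transpose_mul_diagonal_mul]
  calc ∑ t, ν t * (G * Gᵀ) t t ≤ c * ∑ t ∈ S, ν t :=
        bathtub_sum_mul_le S
          (fun t ht u hu => hν (by simp only [hmemS] at ht hu; exact Fin.le_def.2 (by omega)))
          (fun t => by simpa [mul_apply] using
            Finset.sum_nonneg fun k (_ : k ∈ Finset.univ) => mul_self_nonneg (G t k))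
          (fun t _ => diag_mul_transpose_le hc hG t) hdiag_sum
    _ = c * ∑ k, ν (Fin.castLE hrT k) := by rw [Finset.sum_map]; rfl

theorem mul_eq_mul_diagonal_of_mulVec_eq_smul {m n R : Type*} [Fintype m] [Fintype n]
    [DecidableEq n] [CommSemiring R] {A : Matrix m m R} {F : Matrix m n R} {μ : n → R}
    (h : ∀ k, A *ᵥ (fun t => F t k) = μ k • fun t => F t k) :
    A * F = F * diagonal μ := by
  ext t k
  rw [mul_diagonal]
  simpa [mulVec, dotProduct, mul_apply, mul_comm] using congrFun (h k) t

theorem trace_transpose_mul_mul_comm {N p R : Type*} [Fintype N] [Fintype p] [CommSemiring R]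
    {W : Matrix N N R} (hW : W.IsSymm) (X Z : Matrix N p R) :
    trace (Xᵀ * W * Z) = trace (Zᵀ * W * X) := by
  rw [← trace_transpose]
  simp only [transpose_mul, transpose_transpose, hW.eq, Matrix.mul_assoc]

theorem trace_sub_mul_transpose_eq {N T r K : Type*} [Fintype N] [Fintype T] [Fintype r]
    [DecidableEq r] [Field K] {W : Matrix N N K} (hW : W.IsSymm) (Y : Matrix N T K)
    (Λ : Matrix N r K) {F : Matrix T r K} {c : K} (hc : c ≠ 0) (hF : Fᵀ * F = c • 1) :
    trace ((Y - Λ * Fᵀ)ᵀ * W * (Y - Λ * Fᵀ))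
      = trace (Yᵀ * W * Y) - c⁻¹ * trace (Fᵀ * (Yᵀ * W * Y) * F)
        + c * trace ((Λ - c⁻¹ • (Y * F))ᵀ * W * (Λ - c⁻¹ • (Y * F))) := by
  have hmove : ∀ Z : Matrix N T K, trace ((Λ * Fᵀ)ᵀ * W * Z) = trace (Λᵀ * W * (Z * F)) := by
    intro Z
    rw [transpose_mul, transpose_transpose, Matrix.mul_assoc, Matrix.mul_assoc, trace_mul_comm]
    simp only [Matrix.mul_assoc]
  have hquad : trace (Fᵀ * (Yᵀ * W * Y) * F) = trace ((Y * F)ᵀ * W * (Y * F)) := by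
    simp only [transpose_mul, Matrix.mul_assoc]
  have hFF : Λ * Fᵀ * F = c • Λ := by rw [Matrix.mul_assoc, hF, Matrix.mul_smul, Matrix.mul_one]
  simp only [transpose_sub, Matrix.sub_mul, Matrix.mul_sub, trace_sub, transpose_smul,
    Matrix.smul_mul, Matrix.mul_smul, trace_smul, smul_eq_mul]
  rw [trace_transpose_mul_mul_comm hW Y (Λ * Fᵀ), hmove, hmove, hFF, Matrix.mul_smul, trace_smul,
    trace_transpose_mul_mul_comm hW (Y * F) Λ, hquad, smul_eq_mul]
  field_simp
  ring

/-- The WPC estimators: if the columns of `F̂` are `√T` times orthonormal eigenvectors of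
`Yᵀ W Y` for its `r` largest eigenvalues and `Λ̂ = T⁻¹ Y F̂`, then `(1/T) F̂ᵀ F̂ = I_r`,
`Λ̂ᵀ W Λ̂` is diagonal, and `(Λ̂, F̂)` minimizes the weighted least squares objective over
all `(Λ, F)` with `(1/T) Fᵀ F = I_r`. -/
theorem stmt11 (N T r : ℕ) (hrT : r ≤ T)
    (W : Matrix (Fin N) (Fin N) ℝ) (hW : W.PosSemidef)
    (Y : Matrix (Fin N) (Fin T) ℝ)
    (ν : Fin T → ℝ) (hν : Antitone ν)
    (hQ : ∃ Q : Matrix (Fin T) (Fin T) ℝ, Qᵀ * Q = 1 ∧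
        Yᵀ * W * Y = Q * Matrix.diagonal ν * Qᵀ)
    (Fhat : Matrix (Fin T) (Fin r) ℝ)
    (hFnorm : (1 / (T : ℝ)) • (Fhatᵀ * Fhat) = 1)
    (hFeig : ∀ k : Fin r, (Yᵀ * W * Y) *ᵥ (fun t => Fhat t k)
        = ν (Fin.castLE hrT k) • fun t => Fhat t k) :
    ((1 / (T : ℝ)) • (Fhatᵀ * Fhat) = 1)
    ∧ (((1 / (T : ℝ)) • (Y * Fhat))ᵀ * W * ((1 / (T : ℝ)) • (Y * Fhat))).IsDiag
    ∧ (∀ (Λ : Matrix (Fin N) (Fin r) ℝ) (F : Matrix (Fin T) (Fin r) ℝ),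
        (1 / (T : ℝ)) • (Fᵀ * F) = 1 →
        trace ((Y - ((1 / (T : ℝ)) • (Y * Fhat)) * Fhatᵀ)ᵀ * W *
            (Y - ((1 / (T : ℝ)) • (Y * Fhat)) * Fhatᵀ))
        ≤ trace ((Y - Λ * Fᵀ)ᵀ * W * (Y - Λ * Fᵀ))) := by
  obtain ⟨Q, hQorth, hA⟩ := hQ
  set A := Yᵀ * W * Y
  set μ : Fin r → ℝ := fun k => ν (Fin.castLE hrT k)
  have hAF : A * Fhat = Fhat * diagonal μ := mul_eq_mul_diagonal_of_mulVec_eq_smul hFeig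
  simp only [one_div] at hFnorm ⊢
  refine ⟨hFnorm, ?_, ?_⟩
  · have hgram : ((T : ℝ)⁻¹ • (Y * Fhat))ᵀ * W * ((T : ℝ)⁻¹ • (Y * Fhat))
        = (T : ℝ)⁻¹ • diagonal μ := by
      rw [← Matrix.one_mul (diagonal μ), ← hFnorm]
      simp only [transpose_smul, transpose_mul, Matrix.smul_mul, Matrix.mul_smul, smul_smul,
        Matrix.mul_assoc, ← hAF, A]
    rw [hgram]
    exact (isDiag_diagonal μ).smul _
  · intro Λ F hF
    obtain rfl | hT := Nat.eq_zero_or_pos T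
    · simp only [trace_fin_zero, le_refl]
    have hT0 : (T : ℝ) ≠ 0 := by positivity
    rw [inv_smul_eq_iff₀ hT0] at hFnorm hF
    have hWsymm : W.IsSymm := by
      simpa [IsSymm, conjTranspose_eq_transpose_of_trivial] using hW.isHermitian
    have hFhat_trace : trace (Fhatᵀ * A * Fhat) = T * ∑ k, μ k := by
      rw [Matrix.mul_assoc, hAF, ← Matrix.mul_assoc, hFnorm, Matrix.smul_mul, Matrix.one_mul,
        trace_smul, trace_diagonal, smul_eq_mul]
    have hky_fan : trace (Fᵀ * A * F) ≤ T * ∑ k, μ k := by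
      rw [hA]; exact ky_fan_trace_le hrT hν hQorth (Nat.cast_nonneg T) hF
    have hresidual :
        0 ≤ trace ((Λ - (T : ℝ)⁻¹ • (Y * F))ᵀ * W * (Λ - (T : ℝ)⁻¹ • (Y * F))) := by
      simpa [conjTranspose_eq_transpose_of_trivial] using
        (hW.conjTranspose_mul_mul_same (Λ - (T : ℝ)⁻¹ • (Y * F))).trace_nonneg
    calc _ = trace A - ∑ k, μ k := by
          rw [trace_sub_mul_transpose_eq hWsymm Y _ hT0 hFnorm, sub_self, hFhat_trace]
          simp [A, hT0]
      _ ≤ trace A - (T : ℝ)⁻¹ * trace (Fᵀ * A * F) := by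
          gcongr
          calc (T : ℝ)⁻¹ * trace (Fᵀ * A * F) ≤ (T : ℝ)⁻¹ * (T * ∑ k, μ k) := by gcongr
            _ = ∑ k, μ k := by field_simp
      _ ≤ _ := by
          rw [trace_sub_mul_transpose_eq hWsymm Y Λ hT0 hF]
          exact le_add_of_nonneg_right (mul_nonneg (Nat.cast_nonneg T) hresidual)
end
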